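/- The critical pair arising from the self-overlap of rule π in λJmse is joinable: for any term t, co-term l, and evaluation contexts E', E, the two reducts L = {t(l @ E')}E and R = {tl}(E' @ E) of {{tl}E'}E have a common →*-reduct, namely t((l @ E') @ E) = t(l @ (E' @ E)). -/
import Mathlib


-- Terms, co-terms and commands of the λJmse-calculus.
mutual
inductive Tm : Type
  | var : ℕ → Tm
  | lam : ℕ → Tm → Tm
  | coe : Cmd → Tm
  deriving DecidableEq
inductive Co : Type
  | nil : Co
  | cons : Tm → Co → Co
  | sel : ℕ → Cmd → Co
  deriving DecidableEq
inductive Cmd : Type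
  | cut : Tm → Co → Cmd
  deriving DecidableEq
end

-- Capture-avoiding (structural) substitution.
mutual
def substTm (t : Tm) (x : ℕ) : Tm → Tm
  | .var y => if x = y then t else .var y
  | .lam y u => .lam y (substTm t x u)
  | .coe c => .coe (substCmd t x c)
def substCo (t : Tm) (x : ℕ) : Co → Co
  | .nil => .nil
  | .cons u l => .cons (substTm t x u) (substCo t x l)
  | .sel y c => .sel y (substCmd t x c)
def substCmd (t : Tm) (x : ℕ) : Cmd → Cmd
  | .cut u l => .cut (substTm t x u) (substCo t x l)
end

-- Free variables.
mutual
def freeTm : Tm → Finset ℕ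
  | .var x => {x}
  | .lam x t => freeTm t \ {x}
  | .coe c => freeCmd c
def freeCo : Co → Finset ℕ
  | .nil => ∅
  | .cons u l => freeTm u ∪ freeCo l
  | .sel x c => freeCmd c \ {x}
def freeCmd : Cmd → Finset ℕ
  | .cut t l => freeTm t ∪ freeCo l
end

/-- Eager append of co-terms. -/
def appendCo : Co → Co → Co
  | .nil, l' => l'
  | .cons u l, l' => .cons u (appendCo l l')
  | .sel x (.cut t l), l' => .sel x (.cut t (appendCo l l'))

/-- Evaluation contexts: co-terms of the form `[]` or `u::l`. -/
def IsE : Co → Prop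
  | .nil => True
  | .cons _ _ => True
  | .sel _ _ => False

-- One-step reduction of λJmse.
mutual
inductive StepTm : Tm → Tm → Prop
  | eps (t : Tm) : StepTm (.coe (.cut t .nil)) t
  | lam {t t' : Tm} (x : ℕ) : StepTm t t' → StepTm (.lam x t) (.lam x t')
  | coe {c c' : Cmd} : StepCmd c c' → StepTm (.coe c) (.coe c')
inductive StepCo : Co → Co → Prop
  | mu {x : ℕ} {l : Co} : x ∉ freeCo l →
      StepCo (.sel x (.cut (.var x) l)) l
  | consL {u u' : Tm} (l : Co) : StepTm u u' → StepCo (.cons u l) (.cons u' l)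
  | consR {l l' : Co} (u : Tm) : StepCo l l' → StepCo (.cons u l) (.cons u l')
  | sel {c c' : Cmd} (x : ℕ) : StepCmd c c' → StepCo (.sel x c) (.sel x c')
inductive StepCmd : Cmd → Cmd → Prop
  | beta (x : ℕ) (t u : Tm) (l : Co) :
      StepCmd (.cut (.lam x t) (.cons u l)) (.cut u (.sel x (.cut t l)))
  | pi (t : Tm) (l E : Co) : IsE E →
      StepCmd (.cut (.coe (.cut t l)) E) (.cut t (appendCo l E))
  | sigma (t : Tm) (x : ℕ) (c : Cmd) :
      StepCmd (.cut t (.sel x c)) (substCmd t x c)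
  | cutL {t t' : Tm} (l : Co) : StepTm t t' → StepCmd (.cut t l) (.cut t' l)
  | cutR {l l' : Co} (t : Tm) : StepCo l l' → StepCmd (.cut t l) (.cut t l')
end


lemma appendCo_assoc (l E' E : Co) :
    appendCo (appendCo l E') E = appendCo l (appendCo E' E) := by
  match l with
  | .nil => rfl
  | .cons u l => simp [appendCo, appendCo_assoc l E' E]
  | .sel x (.cut u m) => simp [appendCo, appendCo_assoc m E' E]

lemma isE_append {E' E : Co} (h : IsE E') (hE : IsE E) : IsE (appendCo E' E) := by
  cases E' with
  | nil => simpa [appendCo]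
  | cons u l => trivial
  | sel x c => exact h.elim

theorem pi_critical_pair_joinable (t : Tm) (l E' E : Co) (hE' : IsE E') (hE : IsE E) :
    Relation.ReflTransGen StepCmd
      (Cmd.cut (.coe (.cut t (appendCo l E'))) E)
      (Cmd.cut t (appendCo (appendCo l E') E)) ∧
    Relation.ReflTransGen StepCmd
      (Cmd.cut (.coe (.cut t l)) (appendCo E' E))
      (Cmd.cut t (appendCo (appendCo l E') E)) ∧
    appendCo (appendCo l E') E = appendCo l (appendCo E' E) := by
  
  refine ⟨Relation.ReflTransGen.single (StepCmd.pi _ _ _ hE), ?_, appendCo_assoc l E' E⟩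
  rw [appendCo_assoc]
  exact Relation.ReflTransGen.single (StepCmd.pi _ _ _ (isE_append hE' hE))
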